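/- arXiv:2202.06467 — 3 statements merged into one kernel-verified Lean document; each statement's English description precedes it below -/
import Mathlib

section
/- The function G_μ(α) = Φ(Φ^{-1}(1-α) - μ) on [0,1], where Φ is the standard Gaussian CDF and μ ≥ 0, is convex, continuous, non-increasing, and satisfies G_μ(α) ≤ 1 - α for all α ∈ [0,1]. -/
open ProbabilityTheory

/-- The standard Gaussian cumulative distribution function. -/
noncomputable def stdGaussianCDF (x : ℝ) : ℝ :=
  ((gaussianReal 0 1) (Set.Iic x)).toReal

/-- The trade-off function `G_μ` of μ-Gaussian Differential Privacy, extended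
continuously to the endpoints of `[0,1]`. -/
noncomputable def Gmu (μ α : ℝ) : ℝ :=
  if α ≤ 0 then 1
  else if 1 ≤ α then 0
  else stdGaussianCDF (Function.invFun stdGaussianCDF (1 - α) - μ)

/-!
Writing `α = 1 - Φ x`, one has `G_μ α = Φ (x - μ) ≤ Φ x = 1 - α`. As `α` runs over `[0,1]`,
`G_μ` decreases from `1` to `0` and takes every value in between, so it is continuous.
For convexity, the Neyman–Pearson argument: since `μ ≥ 0`, the likelihood ratio
`φ (t - μ) / φ t = exp (μ t - μ² / 2)` is increasing in `t`, so with `c = exp (μ s - μ² / 2)` the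
function `x ↦ Φ (x - μ) - c Φ x` attains its minimum at `x = s`. This says exactly that the line
of slope `-c` through `(1 - Φ s, Φ (s - μ))` lies below the graph of `G_μ`.
-/

open MeasureTheory Set Filter Real Topology

local notation "φ" => gaussianPDFReal 0 1
local notation "Φ" => stdGaussianCDF

theorem intervalIntegral_nonneg_of_nonpos_of_nonneg {f : ℝ → ℝ} {s : ℝ}
    (hneg : ∀ t ≤ s, f t ≤ 0) (hpos : ∀ t, s ≤ t → 0 ≤ f t) (x : ℝ) :
    0 ≤ ∫ t in s..x, f t := by
  rcases le_total s x with h | h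
  · exact intervalIntegral.integral_nonneg h fun t ht => hpos t ht.1
  · rw [intervalIntegral.integral_symm, ← intervalIntegral.integral_neg]
    exact intervalIntegral.integral_nonneg h fun t ht => neg_nonneg.2 (hneg t ht.2)

theorem convexOn_Icc_of_exists_affine_le {f : ℝ → ℝ} {a b : ℝ}
    (h : ∀ y ∈ Ioc a b, ∃ m k : ℝ, (∀ x ∈ Icc a b, m * x + k ≤ f x) ∧ f y = m * y + k) :
    ConvexOn ℝ (Icc a b) f := by
  refine convexOn_iff_forall_pos.2 ⟨convex_Icc a b, fun x hx y hy s t hs ht hst => ?_⟩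
  simp only [smul_eq_mul]
  have hz : s * x + t * y ∈ Icc a b := convex_Icc a b hx hy hs.le ht.le hst
  rcases hz.1.eq_or_lt with hza | hza
  · have hsum : s * (x - a) + t * (y - a) = 0 := by linear_combination -hza - a * hst
    obtain ⟨hxa, hya⟩ := (add_eq_zero_iff_of_nonneg (mul_nonneg hs.le (sub_nonneg.2 hx.1))
      (mul_nonneg ht.le (sub_nonneg.2 hy.1))).1 hsum
    obtain rfl : x = a := sub_eq_zero.1 ((mul_eq_zero.1 hxa).resolve_left hs.ne')
    obtain rfl : y = x := sub_eq_zero.1 ((mul_eq_zero.1 hya).resolve_left ht.ne')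
    rw [← hza, ← add_mul, hst, one_mul]
  obtain ⟨m, k, hle, heq⟩ := h _ ⟨hza, hz.2⟩
  calc f (s * x + t * y) = s * (m * x + k) + t * (m * y + k) := by
        rw [heq]; linear_combination (-k) * hst
    _ ≤ s * f x + t * f y := by gcongr <;> exact hle _ ‹_›

theorem continuous_gaussianPDFReal_zero_one : Continuous φ := by
  rw [gaussianPDFReal_def]; fun_prop

theorem gaussianPDFReal_zero_one_sub (μ t : ℝ) :
    φ (t - μ) = φ t * exp (μ * t - μ ^ 2 / 2) := by
  simp only [gaussianPDFReal, mul_assoc, ← exp_add]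
  congr 2; push_cast; ring

theorem stdGaussianCDF_eq_cdf : Φ = cdf (gaussianReal 0 1) := by
  ext x; rw [stdGaussianCDF, cdf_eq_real]; rfl

theorem stdGaussianCDF_eq_integral (x : ℝ) : Φ x = ∫ t in Iic x, φ t := by
  rw [stdGaussianCDF, gaussianReal_apply_eq_integral 0 one_ne_zero, ENNReal.toReal_ofReal
    (setIntegral_nonneg measurableSet_Iic fun t _ => gaussianPDFReal_nonneg 0 1 t)]

theorem stdGaussianCDF_sub (a b : ℝ) : Φ b - Φ a = ∫ t in a..b, φ t := by
  have hint : Integrable φ := integrable_gaussianPDFReal 0 1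
  rw [stdGaussianCDF_eq_integral, stdGaussianCDF_eq_integral,
    intervalIntegral.integral_Iic_sub_Iic hint.integrableOn hint.integrableOn]

theorem strictMono_stdGaussianCDF : StrictMono Φ := fun a b hab => by
  have := intervalIntegral.intervalIntegral_pos_of_pos
    (continuous_gaussianPDFReal_zero_one.intervalIntegrable a b)
    (gaussianPDFReal_pos 0 1 · one_ne_zero) hab
  linarith [stdGaussianCDF_sub a b]

theorem continuous_stdGaussianCDF : Continuous Φ := by
  have h := intervalIntegral.continuous_primitive (μ := volume)
    (continuous_gaussianPDFReal_zero_one.intervalIntegrable ·) 0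
  refine (continuous_const.add h).congr (f := fun x => Φ 0 + ∫ t in (0 : ℝ)..x, φ t) fun x => ?_
  rw [← stdGaussianCDF_sub]; ring

theorem tendsto_stdGaussianCDF_atTop : Tendsto Φ atTop (𝓝 1) := by
  rw [stdGaussianCDF_eq_cdf]; exact tendsto_cdf_atTop _

theorem tendsto_stdGaussianCDF_atBot : Tendsto Φ atBot (𝓝 0) := by
  rw [stdGaussianCDF_eq_cdf]; exact tendsto_cdf_atBot _

theorem stdGaussianCDF_mem_Ioo (x : ℝ) : Φ x ∈ Ioo 0 1 := by
  have h0 : 0 ≤ Φ (x - 1) := by rw [stdGaussianCDF_eq_cdf]; exact cdf_nonneg _ _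
  have h1 : Φ (x + 1) ≤ 1 := by rw [stdGaussianCDF_eq_cdf]; exact cdf_le_one _ _
  exact ⟨h0.trans_lt (strictMono_stdGaussianCDF (by linarith)),
    (strictMono_stdGaussianCDF (by linarith)).trans_le h1⟩

theorem exists_stdGaussianCDF_eq {y : ℝ} (hy : y ∈ Ioo 0 1) : ∃ x, Φ x = y := by
  obtain ⟨a, ha⟩ := (tendsto_stdGaussianCDF_atBot.eventually_lt_const hy.1).exists
  obtain ⟨b, hb⟩ := (tendsto_stdGaussianCDF_atTop.eventually_const_lt hy.2).exists
  exact intermediate_value_univ a b continuous_stdGaussianCDF ⟨ha.le, hb.le⟩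

theorem exists_one_sub_stdGaussianCDF_eq {α : ℝ} (hα : α ∈ Ioo 0 1) : ∃ x, 1 - Φ x = α := by
  obtain ⟨x, hx⟩ := exists_stdGaussianCDF_eq (y := 1 - α) ⟨by linarith [hα.2], by linarith [hα.1]⟩
  exact ⟨x, by linarith⟩

theorem Gmu_of_nonpos (μ : ℝ) {α : ℝ} (hα : α ≤ 0) : Gmu μ α = 1 := if_pos hα

theorem Gmu_of_one_le (μ : ℝ) {α : ℝ} (hα : 1 ≤ α) : Gmu μ α = 0 := by
  rw [Gmu, if_neg (by linarith), if_pos hα]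

theorem Gmu_one_sub_stdGaussianCDF (μ x : ℝ) : Gmu μ (1 - Φ x) = Φ (x - μ) := by
  obtain ⟨h0, h1⟩ := stdGaussianCDF_mem_Ioo x
  rw [Gmu, if_neg (by linarith), if_neg (by linarith), sub_sub_cancel,
    Function.leftInverse_invFun strictMono_stdGaussianCDF.injective]

theorem eq_zero_or_eq_one_or_exists_eq_one_sub_stdGaussianCDF {α : ℝ} (hα : α ∈ Icc 0 1) :
    α = 0 ∨ α = 1 ∨ ∃ x, 1 - Φ x = α := by
  rcases hα.1.eq_or_lt with rfl | h0
  · exact .inl rfl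
  rcases hα.2.eq_or_lt with rfl | h1
  · exact .inr (.inl rfl)
  exact .inr (.inr (exists_one_sub_stdGaussianCDF_eq ⟨h0, h1⟩))

theorem Gmu_mem_Icc (μ α : ℝ) : Gmu μ α ∈ Icc 0 1 := by
  unfold Gmu
  split_ifs
  exacts [⟨zero_le_one, le_rfl⟩, ⟨le_rfl, zero_le_one⟩,
    Ioo_subset_Icc_self (stdGaussianCDF_mem_Ioo _)]

theorem Gmu_antitone (μ : ℝ) : Antitone (Gmu μ) := by
  intro a b hab
  rcases le_or_gt a 0 with ha | ha
  · rw [Gmu_of_nonpos μ ha]; exact (Gmu_mem_Icc μ b).2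
  rcases le_or_gt 1 b with hb | hb
  · rw [Gmu_of_one_le μ hb]; exact (Gmu_mem_Icc μ a).1
  obtain ⟨x, rfl⟩ := exists_one_sub_stdGaussianCDF_eq ⟨ha, hab.trans_lt hb⟩
  obtain ⟨y, rfl⟩ := exists_one_sub_stdGaussianCDF_eq ⟨ha.trans_le hab, hb⟩
  rw [Gmu_one_sub_stdGaussianCDF, Gmu_one_sub_stdGaussianCDF]
  exact strictMono_stdGaussianCDF.monotone
    (sub_le_sub_right (strictMono_stdGaussianCDF.le_iff_le.1 (by linarith)) μ)

theorem range_Gmu (μ : ℝ) : range (Gmu μ) = Icc 0 1 := by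
  refine (range_subset_iff.2 (Gmu_mem_Icc μ)).antisymm fun y hy => ?_
  rcases hy.1.eq_or_lt with rfl | h0
  · exact ⟨1, Gmu_of_one_le μ le_rfl⟩
  rcases hy.2.eq_or_lt with rfl | h1
  · exact ⟨0, Gmu_of_nonpos μ le_rfl⟩
  obtain ⟨x, rfl⟩ := exists_stdGaussianCDF_eq ⟨h0, h1⟩
  exact ⟨1 - Φ (x + μ), by rw [Gmu_one_sub_stdGaussianCDF, add_sub_cancel_right]⟩

theorem continuous_Gmu (μ : ℝ) : Continuous (Gmu μ) := by
  -- an antitone map onto an interval has no jumps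
  let g : ℝ → (Icc (0 : ℝ) 1)ᵒᵈ := fun α => OrderDual.toDual ⟨Gmu μ α, Gmu_mem_Icc μ α⟩
  have hg : Continuous g := by
    refine Monotone.continuous_of_surjective (fun a b hab => Gmu_antitone μ hab) fun y => ?_
    obtain ⟨α, hα⟩ : y.1 ∈ range (Gmu μ) := (range_Gmu μ).symm ▸ y.2
    exact ⟨α, Subtype.ext hα⟩
  exact continuous_subtype_val.comp (continuous_ofDual.comp hg)

theorem Gmu_le_one_sub (μ : ℝ) (hμ : 0 ≤ μ) {α : ℝ} (hα : α ∈ Icc 0 1) : Gmu μ α ≤ 1 - α := by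
  rcases eq_zero_or_eq_one_or_exists_eq_one_sub_stdGaussianCDF hα with rfl | rfl | ⟨x, rfl⟩
  · simp [Gmu_of_nonpos]
  · simp [Gmu_of_one_le]
  · rw [Gmu_one_sub_stdGaussianCDF, sub_sub_cancel]
    exact strictMono_stdGaussianCDF.monotone (by linarith)

theorem stdGaussianCDF_sub_sub_mul_le (μ : ℝ) (hμ : 0 ≤ μ) (s x : ℝ) :
    Φ (s - μ) - exp (μ * s - μ ^ 2 / 2) * Φ s ≤ Φ (x - μ) - exp (μ * s - μ ^ 2 / 2) * Φ x := by
  set c := exp (μ * s - μ ^ 2 / 2)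
  have hφ := continuous_gaussianPDFReal_zero_one
  have hdiff : (Φ (x - μ) - c * Φ x) - (Φ (s - μ) - c * Φ s)
      = ∫ t in s..x, (φ (t - μ) - c * φ t) := by
    have hshift : IntervalIntegrable (fun t => φ (t - μ)) volume s x :=
      (hφ.comp (continuous_sub_right μ)).intervalIntegrable s x
    have hscale : IntervalIntegrable (fun t => c * φ t) volume s x :=
      (continuous_const.mul hφ).intervalIntegrable s x
    rw [intervalIntegral.integral_sub hshift hscale, intervalIntegral.integral_comp_sub_right φ μ,
      intervalIntegral.integral_const_mul, ← stdGaussianCDF_sub, ← stdGaussianCDF_sub]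
    ring
  rw [← sub_nonneg, hdiff]
  -- the likelihood ratio `φ (t - μ) / φ t = exp (μ t - μ² / 2)` crosses `c` at `t = s`
  refine intervalIntegral_nonneg_of_nonpos_of_nonneg (fun t ht => ?_) (fun t ht => ?_) x
  all_goals
    rw [gaussianPDFReal_zero_one_sub]
    have hφt := gaussianPDFReal_nonneg 0 1 t
  · have : exp (μ * t - μ ^ 2 / 2) ≤ c := exp_le_exp.2 (by nlinarith)
    nlinarith
  · have : c ≤ exp (μ * t - μ ^ 2 / 2) := exp_le_exp.2 (by nlinarith)
    nlinarith

theorem stdGaussianCDF_sub_add_mul_le_Gmu (μ : ℝ) (hμ : 0 ≤ μ) (s : ℝ) {α : ℝ}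
    (hα : α ∈ Icc 0 1) : Φ (s - μ) + exp (μ * s - μ ^ 2 / 2) * (1 - Φ s - α) ≤ Gmu μ α := by
  set c := exp (μ * s - μ ^ 2 / 2)
  have hmin := stdGaussianCDF_sub_sub_mul_le μ hμ s
  rcases eq_zero_or_eq_one_or_exists_eq_one_sub_stdGaussianCDF hα with rfl | rfl | ⟨x, rfl⟩
  · have hlim : Tendsto (fun x => Φ (x - μ) - c * Φ x) atTop (𝓝 (1 - c * 1)) :=
      (tendsto_stdGaussianCDF_atTop.comp (tendsto_atTop_add_const_right _ (-μ) tendsto_id)).sub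
        (tendsto_stdGaussianCDF_atTop.const_mul c)
    have := ge_of_tendsto' hlim hmin
    rw [Gmu_of_nonpos μ le_rfl]; linarith
  · have hlim : Tendsto (fun x => Φ (x - μ) - c * Φ x) atBot (𝓝 (0 - c * 0)) :=
      (tendsto_stdGaussianCDF_atBot.comp (tendsto_atBot_add_const_right _ (-μ) tendsto_id)).sub
        (tendsto_stdGaussianCDF_atBot.const_mul c)
    have := ge_of_tendsto' hlim hmin
    rw [Gmu_of_one_le μ le_rfl]; linarith
  · rw [Gmu_one_sub_stdGaussianCDF]; linarith [hmin x]

theorem Gmu_convexOn (μ : ℝ) (hμ : 0 ≤ μ) : ConvexOn ℝ (Icc 0 1) (Gmu μ) := by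
  refine convexOn_Icc_of_exists_affine_le fun y hy => ?_
  rcases hy.2.eq_or_lt with rfl | hy1
  · exact ⟨0, 0, fun x _ => by simpa using (Gmu_mem_Icc μ x).1, by simp [Gmu_of_one_le]⟩
  obtain ⟨s, rfl⟩ := exists_one_sub_stdGaussianCDF_eq ⟨hy.1, hy1⟩
  refine ⟨-exp (μ * s - μ ^ 2 / 2), Φ (s - μ) + exp (μ * s - μ ^ 2 / 2) * (1 - Φ s),
    fun x hx => ?_, ?_⟩
  · linarith [stdGaussianCDF_sub_add_mul_le_Gmu μ hμ s hx]
  · rw [Gmu_one_sub_stdGaussianCDF]; ring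

theorem stmt_6 (μ : ℝ) (hμ : 0 ≤ μ) :
    ConvexOn ℝ (Set.Icc 0 1) (Gmu μ) ∧
    ContinuousOn (Gmu μ) (Set.Icc 0 1) ∧
    AntitoneOn (Gmu μ) (Set.Icc 0 1) ∧
    (∀ α ∈ Set.Icc (0 : ℝ) 1, Gmu μ α ≤ 1 - α) :=
  ⟨Gmu_convexOn μ hμ, (continuous_Gmu μ).continuousOn, (Gmu_antitone μ).antitoneOn _,
    fun _ hα => Gmu_le_one_sub μ hμ hα⟩
end

section
/- For μ > 0, the function δ(ε) = Φ(-ε/μ + μ/2) - e^ε·Φ(-ε/μ - μ/2) is non-negative and non-increasing in ε on [0, ∞), and δ(ε) → 0 as ε → ∞. -/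
/-!
Write `p_m` for the density of `𝒩(m, 1)`. The likelihood ratio `p_{-μ} / p_0 = exp (-μ t - μ² / 2)`
is decreasing in `t` and crosses `e^ε` exactly at `t = -ε/μ - μ/2`, so
`δ(ε) = ∫ (p_{-μ} - e^ε p_0)⁺`, the hockey-stick divergence of `𝒩(-μ, 1)` from `𝒩(0, 1)`.
In this form `δ` is visibly non-negative and non-increasing in `ε`; and `0 ≤ δ(ε) ≤ Φ(-ε/μ + μ/2)`,
which tends to `0`.
-/

open ProbabilityTheory Filter

open MeasureTheory Set Real

noncomputable def gdpDelta (μ ε : ℝ) : ℝ :=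
  stdGaussianCDF (-ε / μ + μ / 2) - exp ε * stdGaussianCDF (-ε / μ - μ / 2)

lemma integral_gaussianPDFReal_Iic (m : ℝ) {v : NNReal} (hv : v ≠ 0) (b : ℝ) :
    ∫ t in Iic b, gaussianPDFReal m v t = (gaussianReal m v (Iic b)).toReal := by
  rw [gaussianReal_apply_eq_integral m hv, ENNReal.toReal_ofReal
    (setIntegral_nonneg measurableSet_Iic fun t _ => gaussianPDFReal_nonneg _ _ _)]

lemma gaussianReal_Iic_toReal (m b : ℝ) :
    (gaussianReal m 1 (Iic b)).toReal = stdGaussianCDF (b - m) := by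
  have hmap : (gaussianReal 0 1).map (· + m) = gaussianReal m 1 := by
    simpa using gaussianReal_map_add_const (μ := 0) (v := 1) m
  rw [stdGaussianCDF, ← hmap, Measure.map_apply (measurable_id'.add_const m) measurableSet_Iic,
    preimage_add_const_Iic]

lemma stdGaussianCDF_nonneg (x : ℝ) : 0 ≤ stdGaussianCDF x :=
  ENNReal.toReal_nonneg

lemma tendsto_stdGaussianCDF_atBot_s7 : Tendsto stdGaussianCDF atBot (nhds 0) := by
  have hcdf : stdGaussianCDF = cdf (gaussianReal 0 1) := funext fun x => (cdf_eq_real _ x).symm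
  exact hcdf ▸ tendsto_cdf_atBot _

lemma setIntegral_Iic_eq_integral_max_zero {f : ℝ → ℝ} (hf : Integrable f) {b : ℝ}
    (hle : ∀ t ≤ b, 0 ≤ f t) (hgt : ∀ t, b < t → f t ≤ 0) :
    ∫ t in Iic b, f t = ∫ t, max (f t) 0 := by
  have hIic : ∫ t in Iic b, f t = ∫ t in Iic b, max (f t) 0 :=
    setIntegral_congr_fun measurableSet_Iic fun t ht => (max_eq_left (hle t ht)).symm
  have hIoi : ∫ t in Ioi b, max (f t) 0 = 0 := by
    rw [setIntegral_congr_fun measurableSet_Ioi fun t ht => max_eq_right (hgt t ht)]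
    simp
  rw [hIic, ← intervalIntegral.integral_Iic_add_Ioi hf.pos_part.integrableOn
    hf.pos_part.integrableOn, hIoi, add_zero]

lemma exp_mul_gaussianPDFReal_le_iff {μ : ℝ} (hμ : 0 < μ) (ε t : ℝ) :
    exp ε * gaussianPDFReal 0 1 t ≤ gaussianPDFReal (-μ) 1 t ↔ t ≤ -ε / μ - μ / 2 := by
  simp only [gaussianPDFReal, NNReal.coe_one, mul_one]
  rw [mul_left_comm, mul_le_mul_iff_right₀ (by positivity), ← exp_add, exp_le_exp,
    show -ε / μ - μ / 2 = (-ε - μ ^ 2 / 2) / μ by field_simp, le_div_iff₀ hμ]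
  constructor <;> intro h <;> nlinarith

lemma integrable_gaussianPDFReal_sub (μ ε : ℝ) :
    Integrable fun t => gaussianPDFReal (-μ) 1 t - exp ε * gaussianPDFReal 0 1 t :=
  (integrable_gaussianPDFReal _ _).sub ((integrable_gaussianPDFReal _ _).const_mul _)

lemma gdpDelta_eq_integral {μ : ℝ} (hμ : 0 < μ) (ε : ℝ) :
    gdpDelta μ ε = ∫ t, max (gaussianPDFReal (-μ) 1 t - exp ε * gaussianPDFReal 0 1 t) 0 := by
  set b := -ε / μ - μ / 2
  have hshift : stdGaussianCDF (-ε / μ + μ / 2) = ∫ t in Iic b, gaussianPDFReal (-μ) 1 t := by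
    rw [integral_gaussianPDFReal_Iic _ one_ne_zero, gaussianReal_Iic_toReal]
    congr 1
    ring
  have hstd : stdGaussianCDF b = ∫ t in Iic b, gaussianPDFReal 0 1 t := by
    rw [integral_gaussianPDFReal_Iic _ one_ne_zero, gaussianReal_Iic_toReal, sub_zero]
  rw [gdpDelta, hshift, hstd, ← integral_const_mul,
    ← integral_sub (integrable_gaussianPDFReal _ _).integrableOn
      ((integrable_gaussianPDFReal _ _).const_mul _).integrableOn]
  refine setIntegral_Iic_eq_integral_max_zero (integrable_gaussianPDFReal_sub μ ε)
    (fun t ht => sub_nonneg.2 ((exp_mul_gaussianPDFReal_le_iff hμ ε t).2 ht))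
    (fun t ht => sub_nonpos.2 ?_)
  exact le_of_not_ge fun h => (exp_mul_gaussianPDFReal_le_iff hμ ε t).1 h |>.not_gt ht

lemma gdpDelta_nonneg {μ : ℝ} (hμ : 0 < μ) (ε : ℝ) : 0 ≤ gdpDelta μ ε := by
  rw [gdpDelta_eq_integral hμ]
  exact integral_nonneg fun t => le_max_right _ _

lemma gdpDelta_antitone {μ : ℝ} (hμ : 0 < μ) : Antitone (gdpDelta μ) := by
  intro ε₁ ε₂ h
  rw [gdpDelta_eq_integral hμ, gdpDelta_eq_integral hμ]
  refine integral_mono (integrable_gaussianPDFReal_sub μ ε₂).pos_part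
    (integrable_gaussianPDFReal_sub μ ε₁).pos_part fun t => ?_
  have := gaussianPDFReal_nonneg 0 1 t
  gcongr

lemma tendsto_gdpDelta_atTop {μ : ℝ} (hμ : 0 < μ) : Tendsto (gdpDelta μ) atTop (nhds 0) := by
  have harg : Tendsto (fun ε : ℝ => -ε / μ + μ / 2) atTop atBot :=
    tendsto_atBot_add_const_right _ _ (tendsto_neg_atTop_atBot.atBot_div_const hμ)
  refine tendsto_of_tendsto_of_tendsto_of_le_of_le tendsto_const_nhds
    (tendsto_stdGaussianCDF_atBot_s7.comp harg) (gdpDelta_nonneg hμ) fun ε => ?_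
  exact sub_le_self _ (mul_nonneg (exp_pos ε).le (stdGaussianCDF_nonneg _))

theorem stmt_7 (μ : ℝ) (hμ : 0 < μ) :
    (∀ ε : ℝ, 0 ≤ ε →
      0 ≤ stdGaussianCDF (-ε / μ + μ / 2) - Real.exp ε * stdGaussianCDF (-ε / μ - μ / 2)) ∧
    AntitoneOn (fun ε : ℝ =>
      stdGaussianCDF (-ε / μ + μ / 2) - Real.exp ε * stdGaussianCDF (-ε / μ - μ / 2))
      (Set.Ici 0) ∧
    Tendsto (fun ε : ℝ =>
      stdGaussianCDF (-ε / μ + μ / 2) - Real.exp ε * stdGaussianCDF (-ε / μ - μ / 2))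
      atTop (nhds 0) :=
  ⟨fun ε _ => gdpDelta_nonneg hμ ε, (gdpDelta_antitone hμ).antitoneOn _, tendsto_gdpDelta_atTop hμ⟩
end

section
/- Let f: [0,1] → [0,1] be a non-increasing convex continuous function with f(x) ≤ 1-x. Then the double Fenchel conjugate (min{f, f^{-1}})^{**} is the greatest convex lower bound of min{f, f^{-1}}, it is itself a trade-off function, and satisfies (min{f, f^{-1}})^{**} ≤ f pointwise. -/
/-- A trade-off function in the f-DP framework. -/
def IsTradeoff (f : ℝ → ℝ) : Prop :=
  ConvexOn ℝ (Set.Icc 0 1) f ∧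
  ContinuousOn f (Set.Icc 0 1) ∧
  AntitoneOn f (Set.Icc 0 1) ∧
  (∀ x ∈ Set.Icc (0 : ℝ) 1, f x ∈ Set.Icc (0 : ℝ) 1) ∧
  (∀ x ∈ Set.Icc (0 : ℝ) 1, f x ≤ 1 - x)

/-- The "inverse" of a trade-off function: `f⁻¹(α) = inf {t ∈ [0,1] : f t ≤ α}`. -/
noncomputable def tradeoffInv (f : ℝ → ℝ) (α : ℝ) : ℝ :=
  sInf {t : ℝ | t ∈ Set.Icc (0 : ℝ) 1 ∧ f t ≤ α}

/-!
The greatest convex minorant of `g = min{f, f⁻¹}` on `[0,1]` is the pointwise supremum of all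
convex minorants of `g`; the constant `0` is one of them. Squeezed between `0` and `g ≤ 1 - x`,
the envelope vanishes at `1`, which is therefore its minimum, and a convex function attaining its
minimum at the right endpoint is non-increasing. It is continuous in the interior by convexity,
at `1` by the squeeze, and at `0` because `g` is lower semicontinuous there (`f` is continuous,
and `f⁻¹` is right-continuous at `0` since `f > 0` below `f⁻¹(0)`), so the affine minorants
`c - K x` with `c < g 0` push the envelope up to its value at `0`.
-/

open Set Filter Topology

section ConvexEnvelope

variable {E : Type*} [AddCommGroup E] [Module ℝ E] {s : Set E} {g h : E → ℝ} {x : E}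

def convexMinorants (s : Set E) (g : E → ℝ) : Set (E → ℝ) :=
  {h | ConvexOn ℝ s h ∧ ∀ y ∈ s, h y ≤ g y}

/-- Only the values on `s` are meaningful: elsewhere the family is unbounded and `⨆` is `0`. -/
noncomputable def convexEnvelope (s : Set E) (g : E → ℝ) (x : E) : ℝ :=
  ⨆ h : convexMinorants s g, (h : E → ℝ) x

lemma zero_mem_convexMinorants (hs : Convex ℝ s) (hg : ∀ y ∈ s, 0 ≤ g y) :
    0 ∈ convexMinorants s g :=
  ⟨convexOn_const 0 hs, hg⟩

lemma bddAbove_convexMinorants_apply (hx : x ∈ s) :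
    BddAbove (range fun h : convexMinorants s g => (h : E → ℝ) x) :=
  ⟨g x, by rintro _ ⟨h, rfl⟩; exact h.2.2 x hx⟩

lemma le_convexEnvelope (hh : h ∈ convexMinorants s g) (hx : x ∈ s) :
    h x ≤ convexEnvelope s g x :=
  le_ciSup (f := fun h : convexMinorants s g => (h : E → ℝ) x)
    (bddAbove_convexMinorants_apply hx) ⟨h, hh⟩

lemma convexEnvelope_le (hne : (convexMinorants s g).Nonempty) (hx : x ∈ s) :
    convexEnvelope s g x ≤ g x :=
  have := hne.to_subtype
  ciSup_le fun h => h.2.2 x hx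

lemma convexOn_convexEnvelope (hs : Convex ℝ s) (hne : (convexMinorants s g).Nonempty) :
    ConvexOn ℝ s (convexEnvelope s g) := by
  refine ⟨hs, fun x hx y hy a b ha hb hab => ?_⟩
  have := hne.to_subtype
  refine ciSup_le fun h => ?_
  calc (h : E → ℝ) (a • x + b • y) ≤ a • (h : E → ℝ) x + b • (h : E → ℝ) y :=
        h.2.1.2 hx hy ha hb hab
    _ ≤ a • convexEnvelope s g x + b • convexEnvelope s g y := by
        gcongr
        · exact le_convexEnvelope h.2 hx
        · exact le_convexEnvelope h.2 hy

lemma convexEnvelope_nonneg (hs : Convex ℝ s) (hg : ∀ y ∈ s, 0 ≤ g y) (hx : x ∈ s) :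
    0 ≤ convexEnvelope s g x :=
  le_convexEnvelope (zero_mem_convexMinorants hs hg) hx

end ConvexEnvelope

lemma ConvexOn.antitoneOn_of_isMinOn_right {a b : ℝ} {φ : ℝ → ℝ}
    (hφ : ConvexOn ℝ (Icc a b) φ) (hmin : IsMinOn φ (Icc a b) b) : AntitoneOn φ (Icc a b) := by
  intro x hx y hy hxy
  rcases hy.2.eq_or_lt with rfl | hyb
  · exact hmin hx
  · exact hφ.le_left_of_right_le'' hx (right_mem_Icc.2 (hxy.trans hyb.le |>.trans' hx.1)) hxy hyb
      (hmin hy)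

section UnitInterval

variable {g : ℝ → ℝ}

lemma antitoneOn_convexEnvelope_Icc (hg₀ : ∀ x ∈ Icc (0 : ℝ) 1, 0 ≤ g x)
    (hg₁ : ∀ x ∈ Icc (0 : ℝ) 1, g x ≤ 1 - x) :
    AntitoneOn (convexEnvelope (Icc 0 1) g) (Icc 0 1) := by
  have hne := zero_mem_convexMinorants (convex_Icc 0 1) hg₀
  refine (convexOn_convexEnvelope (convex_Icc 0 1) ⟨_, hne⟩).antitoneOn_of_isMinOn_right
    fun x hx => ?_
  have h₁ : (1 : ℝ) ∈ Icc (0 : ℝ) 1 := right_mem_Icc.2 zero_le_one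
  calc convexEnvelope (Icc 0 1) g 1 ≤ g 1 := convexEnvelope_le ⟨_, hne⟩ h₁
    _ ≤ 0 := by linarith [hg₁ 1 h₁]
    _ ≤ convexEnvelope (Icc 0 1) g x := convexEnvelope_nonneg (convex_Icc 0 1) hg₀ hx

lemma continuousWithinAt_convexEnvelope_one (hg₀ : ∀ x ∈ Icc (0 : ℝ) 1, 0 ≤ g x)
    (hg₁ : ∀ x ∈ Icc (0 : ℝ) 1, g x ≤ 1 - x) :
    ContinuousWithinAt (convexEnvelope (Icc 0 1) g) (Icc 0 1) 1 := by
  have hne := zero_mem_convexMinorants (convex_Icc 0 1) hg₀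
  have hbounds : ∀ x ∈ Icc (0 : ℝ) 1, 0 ≤ convexEnvelope (Icc 0 1) g x ∧
      convexEnvelope (Icc 0 1) g x ≤ 1 - x := fun x hx =>
    ⟨convexEnvelope_nonneg (convex_Icc 0 1) hg₀ hx,
      (convexEnvelope_le ⟨_, hne⟩ hx).trans (hg₁ x hx)⟩
  have hone : convexEnvelope (Icc 0 1) g 1 = 0 := by
    have := hbounds 1 (right_mem_Icc.2 zero_le_one)
    linarith [this.1, this.2]
  have hlin : Tendsto (fun x : ℝ => 1 - x) (𝓝[Icc 0 1] 1) (𝓝 0) :=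
    ((continuous_sub_left 1).tendsto' 1 0 (sub_self 1)).mono_left nhdsWithin_le_nhds
  rw [ContinuousWithinAt, hone]
  exact tendsto_of_tendsto_of_tendsto_of_le_of_le' tendsto_const_nhds hlin
    (eventually_nhdsWithin_of_forall fun x hx => (hbounds x hx).1)
    (eventually_nhdsWithin_of_forall fun x hx => (hbounds x hx).2)

lemma lowerSemicontinuousWithinAt_convexEnvelope_zero (hg₀ : ∀ x ∈ Icc (0 : ℝ) 1, 0 ≤ g x)
    (hg : LowerSemicontinuousWithinAt g (Icc 0 1) 0) :
    LowerSemicontinuousWithinAt (convexEnvelope (Icc 0 1) g) (Icc 0 1) 0 := by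
  intro c hc
  obtain ⟨c', hcc', hc'⟩ := exists_between hc
  have hc'g : c' < g 0 :=
    hc'.trans_le (convexEnvelope_le ⟨_, zero_mem_convexMinorants (convex_Icc 0 1) hg₀⟩
      (left_mem_Icc.2 zero_le_one))
  obtain ⟨δ, hδ, hgδ⟩ := Metric.eventually_nhds_iff.1 (eventually_nhdsWithin_iff.1 (hg c' hc'g))
  -- The slope `|c'| / δ` makes the affine function drop below `0` before leaving `[0, δ)`.
  set ℓ : ℝ → ℝ := fun x => c' - |c'| / δ * x with hℓ
  have hℓ_mem : ℓ ∈ convexMinorants (Icc 0 1) g := by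
    refine ⟨⟨convex_Icc 0 1, fun x _ y _ a b _ _ hab => le_of_eq ?_⟩, fun x hx => ?_⟩
    · simp only [hℓ, smul_eq_mul]
      linear_combination (-c') * hab
    · have hslope : 0 ≤ |c'| / δ := by positivity
      rcases lt_or_ge x δ with hxδ | hxδ
      · have : c' < g x := hgδ (by rwa [Real.dist_eq, sub_zero, abs_of_nonneg hx.1]) hx
        nlinarith [hx.1]
      · have : |c'| ≤ |c'| / δ * x := by
          calc |c'| = |c'| / δ * δ := by field_simp
            _ ≤ |c'| / δ * x := by gcongr
        linarith [le_abs_self c', hg₀ x hx]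
  have hℓ_lim : Tendsto ℓ (𝓝 0) (𝓝 c') := by
    have hℓ_cont : Continuous ℓ := by simp only [hℓ]; fun_prop
    simpa [hℓ] using hℓ_cont.tendsto 0
  filter_upwards [nhdsWithin_le_nhds (hℓ_lim.eventually_const_lt hcc'), self_mem_nhdsWithin]
    with x hcx hx
  exact hcx.trans_le (le_convexEnvelope hℓ_mem hx)

lemma continuousWithinAt_convexEnvelope_zero (hg₀ : ∀ x ∈ Icc (0 : ℝ) 1, 0 ≤ g x)
    (hg₁ : ∀ x ∈ Icc (0 : ℝ) 1, g x ≤ 1 - x) (hg : LowerSemicontinuousWithinAt g (Icc 0 1) 0) :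
    ContinuousWithinAt (convexEnvelope (Icc 0 1) g) (Icc 0 1) 0 := by
  refine continuousWithinAt_iff_lower_upperSemicontinuousWithinAt.2
    ⟨lowerSemicontinuousWithinAt_convexEnvelope_zero hg₀ hg, fun c hc => ?_⟩
  filter_upwards [self_mem_nhdsWithin] with x hx
  exact (antitoneOn_convexEnvelope_Icc hg₀ hg₁ (left_mem_Icc.2 zero_le_one) hx hx.1).trans_lt hc

lemma isTradeoff_convexEnvelope (hg₀ : ∀ x ∈ Icc (0 : ℝ) 1, 0 ≤ g x)
    (hg₁ : ∀ x ∈ Icc (0 : ℝ) 1, g x ≤ 1 - x) (hg : LowerSemicontinuousWithinAt g (Icc 0 1) 0) :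
    IsTradeoff (convexEnvelope (Icc 0 1) g) := by
  have hne : (convexMinorants (Icc 0 1) g).Nonempty :=
    ⟨_, zero_mem_convexMinorants (convex_Icc 0 1) hg₀⟩
  have hle : ∀ x ∈ Icc (0 : ℝ) 1, convexEnvelope (Icc 0 1) g x ≤ 1 - x := fun x hx =>
    (convexEnvelope_le hne hx).trans (hg₁ x hx)
  refine ⟨convexOn_convexEnvelope (convex_Icc 0 1) hne, ?_, antitoneOn_convexEnvelope_Icc hg₀ hg₁,
    fun x hx => ⟨convexEnvelope_nonneg (convex_Icc 0 1) hg₀ hx, by linarith [hle x hx, hx.1]⟩, hle⟩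
  exact (convexOn_convexEnvelope (convex_Icc 0 1) hne).continuousOn_Icc zero_lt_one
    ((continuousWithinAt_Icc_iff_Ici zero_lt_one).1
      (continuousWithinAt_convexEnvelope_zero hg₀ hg₁ hg))
    ((continuousWithinAt_Icc_iff_Iic zero_lt_one).1 (continuousWithinAt_convexEnvelope_one hg₀ hg₁))

end UnitInterval

lemma tradeoffInv_nonneg (f : ℝ → ℝ) (α : ℝ) : 0 ≤ tradeoffInv f α :=
  Real.sInf_nonneg fun _ ht => ht.1.1

lemma lowerSemicontinuousWithinAt_tradeoffInv_zero {f : ℝ → ℝ} (hf : AntitoneOn f (Icc 0 1))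
    (hf₁ : f 1 ≤ 0) : LowerSemicontinuousWithinAt (tradeoffInv f) (Ici 0) 0 := by
  intro c hc
  rcases lt_or_ge c 0 with hc₀ | hc₀
  · exact Eventually.of_forall fun y => hc₀.trans_le (tradeoffInv_nonneg f y)
  obtain ⟨c', hcc', hc'⟩ := exists_between hc
  have hbdd : BddBelow {t : ℝ | t ∈ Icc (0 : ℝ) 1 ∧ f t ≤ 0} := ⟨0, fun _ ht => ht.1.1⟩
  have h₁ : (1 : ℝ) ∈ Icc (0 : ℝ) 1 := right_mem_Icc.2 zero_le_one
  have hc'mem : c' ∈ Icc (0 : ℝ) 1 :=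
    ⟨hc₀.trans hcc'.le, hc'.le.trans (csInf_le hbdd ⟨h₁, hf₁⟩)⟩
  have hfc' : 0 < f c' := by
    by_contra! h
    exact (csInf_le hbdd ⟨hc'mem, h⟩).not_gt hc'
  filter_upwards [self_mem_nhdsWithin, nhdsWithin_le_nhds (Iio_mem_nhds hfc')] with y hy hyf
  refine hcc'.trans_le (le_csInf ⟨1, h₁, hf₁.trans hy⟩ fun t ht => ?_)
  by_contra! htc
  exact (hf ht.1 hc'mem htc.le).not_gt (ht.2.trans_lt hyf)

theorem stmt_15 (f : ℝ → ℝ) (hf : IsTradeoff f) :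
    ∃ h : ℝ → ℝ,
      -- h is the greatest convex lower bound of min{f, f⁻¹} on [0,1]
      (ConvexOn ℝ (Set.Icc 0 1) h ∧
        (∀ x ∈ Set.Icc (0 : ℝ) 1, h x ≤ min (f x) (tradeoffInv f x)) ∧
        (∀ h' : ℝ → ℝ, ConvexOn ℝ (Set.Icc 0 1) h' →
          (∀ x ∈ Set.Icc (0 : ℝ) 1, h' x ≤ min (f x) (tradeoffInv f x)) →
          ∀ x ∈ Set.Icc (0 : ℝ) 1, h' x ≤ h x)) ∧
      -- h is itself a trade-off function
      IsTradeoff h ∧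
      -- and h ≤ f pointwise on [0,1]
      (∀ x ∈ Set.Icc (0 : ℝ) 1, h x ≤ f x) := by
  obtain ⟨-, hcont, hanti, hrange, hdiag⟩ := hf
  set g : ℝ → ℝ := fun x => min (f x) (tradeoffInv f x)
  have hg₀ : ∀ x ∈ Icc (0 : ℝ) 1, 0 ≤ g x := fun x hx =>
    le_min (hrange x hx).1 (tradeoffInv_nonneg f x)
  have hg₁ : ∀ x ∈ Icc (0 : ℝ) 1, g x ≤ 1 - x := fun x hx => (min_le_left _ _).trans (hdiag x hx)
  have hf₁ : f 1 ≤ 0 := by simpa using hdiag 1 (right_mem_Icc.2 zero_le_one)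
  have hg : LowerSemicontinuousWithinAt g (Icc 0 1) 0 :=
    (hcont 0 (left_mem_Icc.2 zero_le_one)).lowerSemicontinuousWithinAt.inf
      ((lowerSemicontinuousWithinAt_tradeoffInv_zero hanti hf₁).mono Icc_subset_Ici_self)
  have hne : (convexMinorants (Icc 0 1) g).Nonempty :=
    ⟨_, zero_mem_convexMinorants (convex_Icc 0 1) hg₀⟩
  refine ⟨convexEnvelope (Icc 0 1) g,
    ⟨convexOn_convexEnvelope (convex_Icc 0 1) hne, fun x hx => convexEnvelope_le hne hx,
      fun h' hconv hle x hx => le_convexEnvelope ⟨hconv, hle⟩ hx⟩,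
    isTradeoff_convexEnvelope hg₀ hg₁ hg,
    fun x hx => (convexEnvelope_le hne hx).trans (min_le_left _ _)⟩
end
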